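/- arXiv:2010.05098 — 11 statements merged into one kernel-verified Lean document; each statement's English description precedes it below -/
import Mathlib

section
/- Let n be a positive integer and let G be a finite directed graph without self-loops on a vertex set V with |V| = 2n+1, such that every vertex has at least n in-neighbors (i.e., for every v ∈ V, the set of vertices u ≠ v with a directed edge u → v has cardinality at least n). Then there exists a vertex v₀ ∈ V such that every vertex of V is reachable from v₀ by a directed path (every vertex is considered reachable from itself). -/
/-- In a finite graph, any nonempty set `T` closed under in-edges contains a vertex `v₀`
that is "maximal" for reachability: anything that reaches `v₀` is reached back by `v₀`. -/
lemma exists_reach_maximal (V : Type) [Fintype V] (E : V → V → Prop)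
    (T : Set V) (hT : T.Nonempty)
    (hclosed : ∀ u v : V, E u v → v ∈ T → u ∈ T) :
    ∃ v₀ ∈ T, ∀ u : V, Relation.ReflTransGen E u v₀ → Relation.ReflTransGen E v₀ u := by
  classical
  set f : V → ℕ := fun v => {x : V | Relation.ReflTransGen E v x}.ncard with hf
  obtain ⟨v₀, hv₀T', hv₀max⟩ := T.toFinite.toFinset.exists_max_image f
    (by rwa [Set.Finite.toFinset_nonempty])
  have hv₀T : v₀ ∈ T := (Set.Finite.mem_toFinset _).mp hv₀T'
  refine ⟨v₀, hv₀T, fun u hu => ?_⟩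
  -- u ∈ T
  have huT : u ∈ T := by
    induction hu using Relation.ReflTransGen.head_induction_on with
    | refl => exact hv₀T
    | head hab _ ih => exact hclosed _ _ hab ih
  -- descendants of v₀ ⊆ descendants of u
  have hsub : {x : V | Relation.ReflTransGen E v₀ x} ⊆ {x : V | Relation.ReflTransGen E u x} :=
    fun x hx => hu.trans hx
  have hle : f v₀ ≤ f u := Set.ncard_le_ncard hsub (Set.toFinite _)
  have hge : f u ≤ f v₀ := hv₀max u ((Set.Finite.mem_toFinset _).mpr huT)
  have hsets : {x : V | Relation.ReflTransGen E v₀ x} = {x : V | Relation.ReflTransGen E u x} :=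
    Set.eq_of_subset_of_ncard_le hsub hge (Set.toFinite _)
  have : u ∈ {x : V | Relation.ReflTransGen E v₀ x} := by
    rw [hsets]; exact Relation.ReflTransGen.refl
  exact this

/-- The set of ancestors of a reach-maximal vertex has at least `n+1` elements. -/
lemma ancestors_large (n : ℕ) (V : Type) [Fintype V] (E : V → V → Prop)
    (hirr : ∀ v : V, ¬ E v v) (hin : ∀ v : V, n ≤ {u : V | E u v}.ncard)
    (v₀ : V) :
    n + 1 ≤ {u : V | Relation.ReflTransGen E u v₀}.ncard := by
  classical
  have hsub : insert v₀ {u : V | E u v₀} ⊆ {u : V | Relation.ReflTransGen E u v₀} := by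
    rintro u (rfl | hu)
    · exact Relation.ReflTransGen.refl
    · exact Relation.ReflTransGen.single hu
  have hnm : v₀ ∉ {u : V | E u v₀} := hirr v₀
  have h1 : (insert v₀ {u : V | E u v₀}).ncard = {u : V | E u v₀}.ncard + 1 :=
    Set.ncard_insert_of_notMem hnm (Set.toFinite _)
  have h2 := Set.ncard_le_ncard hsub (Set.toFinite _)
  have := hin v₀
  omega

/-- In a directed graph without self-loops on `2n+1` vertices in which every
vertex has at least `n` in-neighbors, there is a vertex `v₀` from which every vertex is
reachable by a directed path. -/
theorem source_component_exists
    (n : ℕ) (hn : 0 < n) (V : Type) [Fintype V]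
    (hcard : Fintype.card V = 2 * n + 1)
    (E : V → V → Prop) (hirr : ∀ v : V, ¬ E v v)
    (hin : ∀ v : V, n ≤ {u : V | E u v}.ncard) :
    ∃ v₀ : V, ∀ w : V, Relation.ReflTransGen E v₀ w := by
  classical
  have hne : (Set.univ : Set V).Nonempty := by
    rw [Set.nonempty_iff_ne_empty]
    intro h
    have h0 : (Set.univ : Set V).ncard = 0 := by rw [h, Set.ncard_empty]
    rw [Set.ncard_univ, Nat.card_eq_fintype_card] at h0
    omega
  obtain ⟨v₀, -, hmax⟩ := exists_reach_maximal V E Set.univ hne (fun _ _ _ _ => trivial)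
  refine ⟨v₀, fun w => ?_⟩
  by_contra hw
  -- the set of vertices not reachable from v₀ is nonempty and in-closed
  set T : Set V := {x : V | ¬ Relation.ReflTransGen E v₀ x} with hT
  have hTne : T.Nonempty := ⟨w, hw⟩
  have hTclosed : ∀ u v : V, E u v → v ∈ T → u ∈ T := by
    intro u v huv hv hu
    exact hv (hu.tail huv)
  obtain ⟨w₀, hw₀T, hw₀max⟩ := exists_reach_maximal V E T hTne hTclosed
  set S : Set V := {u : V | Relation.ReflTransGen E u v₀} with hS
  set S' : Set V := {u : V | Relation.ReflTransGen E u w₀} with hS'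
  have hdisj : Disjoint S S' := by
    rw [Set.disjoint_left]
    intro x hxS hxS'
    exact hw₀T ((hmax x hxS).trans hxS')
  have h1 : n + 1 ≤ S.ncard := ancestors_large n V E hirr hin v₀
  have h2 : n + 1 ≤ S'.ncard := ancestors_large n V E hirr hin w₀
  have hunion : (S ∪ S').ncard = S.ncard + S'.ncard :=
    Set.ncard_union_eq hdisj (Set.toFinite _) (Set.toFinite _)
  have hle : (S ∪ S').ncard ≤ Fintype.card V := by
    rw [← Nat.card_eq_fintype_card, ← Set.ncard_univ]
    exact Set.ncard_le_ncard (Set.subset_univ _) (Set.toFinite _)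
  omega
end

section
/- Let n be a positive integer and let G be a finite directed graph without self-loops on a vertex set V with |V| = 2n+1, such that every vertex has at least n in-neighbors. Then there exists a vertex v₀ ∈ V such that every other vertex w is within directed distance at most 2 of v₀; that is, for every w ≠ v₀, either there is an edge v₀ → w, or there exists u with edges v₀ → u and u → w. -/
/-- In a directed graph without self-loops on `2n+1` vertices in which every
vertex has at least `n` in-neighbors, there is a vertex `v₀` such that every other vertex is
within directed distance at most `2` of `v₀`. -/
theorem source_within_distance_two
    (n : ℕ) (hn : 0 < n) (V : Type) [Fintype V]
    (hcard : Fintype.card V = 2 * n + 1)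
    (E : V → V → Prop) (hirr : ∀ v : V, ¬ E v v)
    (hin : ∀ v : V, n ≤ {u : V | E u v}.ncard) :
    ∃ v₀ : V, ∀ w : V, w ≠ v₀ → (E v₀ w ∨ ∃ u : V, E v₀ u ∧ E u w) := by
  classical
  -- in-neighbors as finsets
  have hin' : ∀ v : V, n ≤ (Finset.univ.filter (fun u => E u v)).card := by
    intro v
    have := hin v
    rwa [Set.ncard_eq_toFinset_card', Set.toFinset_setOf] at this
  -- total out-degree = total in-degree
  have hsum : ∑ v : V, (Finset.univ.filter (fun u => E v u)).card
      = ∑ v : V, (Finset.univ.filter (fun u => E u v)).card := by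
    simp only [Finset.card_filter]
    rw [Finset.sum_comm]
  -- find a vertex of out-degree ≥ n
  obtain ⟨v₀, hv₀⟩ : ∃ v₀ : V, n ≤ (Finset.univ.filter (fun u => E v₀ u)).card := by
    by_contra h
    push_neg at h
    have h1 : ∑ v : V, (Finset.univ.filter (fun u => E v u)).card
        ≤ ∑ _v : V, (n - 1) := by
      apply Finset.sum_le_sum
      intro v _
      exact Nat.le_sub_one_of_lt (h v)
    have h2 : ∑ v : V, n ≤ ∑ v : V, (Finset.univ.filter (fun u => E u v)).card :=
      Finset.sum_le_sum fun v _ => hin' v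
    rw [← hsum] at h2
    have := le_trans h2 h1
    simp only [Finset.sum_const, Finset.card_univ, hcard, smul_eq_mul] at this
    have : (2 * n + 1) * n ≤ (2 * n + 1) * (n - 1) := this
    have := Nat.le_of_mul_le_mul_left this (by omega)
    omega
  refine ⟨v₀, fun w hw => ?_⟩
  by_contra hc
  push_neg at hc
  obtain ⟨h1, h2⟩ := hc
  -- in-neighbors of w avoid N⁺(v₀) ∪ {v₀, w}
  set N : Finset V := Finset.univ.filter (fun u => E v₀ u) with hN
  set S : Finset V := Finset.univ.filter (fun u => E u w) with hS
  have hdisj : Disjoint S (N ∪ {v₀, w}) := by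
    rw [Finset.disjoint_left]
    intro u huS huN
    simp only [hS, Finset.mem_filter, Finset.mem_univ, true_and] at huS
    simp only [hN, Finset.mem_union, Finset.mem_filter, Finset.mem_univ, true_and,
      Finset.mem_insert, Finset.mem_singleton] at huN
    rcases huN with h | h | h
    · exact h2 u h huS
    · exact h1 (h ▸ huS)
    · exact hirr w (h ▸ huS)
  have hcardN : N.card + 2 = (N ∪ {v₀, w}).card := by
    have hv₀N : v₀ ∉ N := by simp [hN, hirr v₀]
    have hwN : w ∉ N := by simp [hN, h1]
    rw [Finset.card_union_of_disjoint]
    · rw [Finset.card_insert_of_notMem (by simpa using Ne.symm hw), Finset.card_singleton]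
    · rw [Finset.disjoint_left]
      intro u huN hu
      simp only [Finset.mem_insert, Finset.mem_singleton] at hu
      rcases hu with rfl | rfl
      · exact hv₀N huN
      · exact hwN huN
  have hle : S.card + (N ∪ {v₀, w}).card ≤ Fintype.card V := by
    rw [← Finset.card_union_of_disjoint hdisj, ← Finset.card_univ]
    exact Finset.card_le_card (Finset.subset_univ _)
  have hSn : n ≤ S.card := hin' w
  have hNn : n ≤ N.card := hv₀
  omega
end

section
/- Let n be a positive integer and let G be a finite directed graph without self-loops on a vertex set V with |V| = m ≥ 2n+1, such that every vertex has at least m − 1 − n in-neighbors. Then there exists a vertex v₀ ∈ V such that every vertex of V is reachable from v₀ by a directed path (every vertex is considered reachable from itself). -/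
/-- In a directed graph without self-loops on `m ≥ 2n+1` vertices in which
every vertex has at least `m - 1 - n` in-neighbors, there is a vertex `v₀` from which every
vertex is reachable by a directed path. -/
theorem source_component_exists_general
    (n m : ℕ) (hn : 0 < n) (hm : 2 * n + 1 ≤ m) (V : Type) [Fintype V]
    (hcard : Fintype.card V = m)
    (E : V → V → Prop) (hirr : ∀ v : V, ¬ E v v)
    (hin : ∀ v : V, m - 1 - n ≤ {u : V | E u v}.ncard) :
    ∃ v₀ : V, ∀ w : V, Relation.ReflTransGen E v₀ w := by
  classical
  have hV : Nonempty V := by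
    rw [← Fintype.card_pos_iff, hcard]; omega
  set R : V → Set V := fun v => {w : V | Relation.ReflTransGen E v w} with hR
  obtain ⟨v₀, hv₀⟩ := Finite.exists_max (fun v : V => (R v).ncard)
  refine ⟨v₀, ?_⟩
  by_contra h
  push_neg at h
  obtain ⟨w, hw⟩ := h
  -- every in-neighbor of v₀ is in R v₀
  have hsub : {u : V | E u v₀} ⊆ R v₀ := by
    intro u hu
    by_contra hu'
    have h1 : insert u (R v₀) ⊆ R u := by
      intro x hx
      rcases hx with rfl | hx
      · exact Relation.ReflTransGen.refl
      · exact Relation.ReflTransGen.head hu hx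
    have h2 := Set.ncard_le_ncard h1 (Set.toFinite _)
    rw [Set.ncard_insert_of_notMem hu' (Set.toFinite _)] at h2
    have := hv₀ u
    omega
  have hv₀R : v₀ ∈ R v₀ := Relation.ReflTransGen.refl
  have hcard1 : m - n ≤ (R v₀).ncard := by
    have h2 : insert v₀ {u : V | E u v₀} ⊆ R v₀ := Set.insert_subset hv₀R hsub
    have h3 := Set.ncard_le_ncard h2 (Set.toFinite _)
    rw [Set.ncard_insert_of_notMem (s := {u : V | E u v₀}) (hirr v₀) (Set.toFinite _)] at h3
    have := hin v₀
    omega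
  -- in-neighbors of w avoid insert w (R v₀)
  have hinw : {u : V | E u w} ⊆ (insert w (R v₀))ᶜ := by
    intro u hu
    simp only [Set.mem_compl_iff, Set.mem_insert_iff]
    push_neg
    refine ⟨?_, ?_⟩
    · exact fun h' => hirr w (h' ▸ hu)
    · intro huR; exact hw (Relation.ReflTransGen.tail huR hu)
  have hc := Set.ncard_le_ncard hinw (Set.toFinite _)
  have hwR : w ∉ R v₀ := hw
  have hcompl : (insert w (R v₀)).ncard + (insert w (R v₀))ᶜ.ncard = m := by
    rw [Set.ncard_add_ncard_compl, Nat.card_eq_fintype_card, hcard]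
  rw [Set.ncard_insert_of_notMem hwR (Set.toFinite _)] at hcompl
  have hRle : (R v₀).ncard ≤ m := by
    have := Set.ncard_le_ncard (Set.subset_univ (R v₀)) (Set.toFinite _)
    rwa [Set.ncard_univ, Nat.card_eq_fintype_card, hcard] at this
  have := hin w
  omega
end

section
/- Let m and b be natural numbers with m ≥ 2b + 1, let v : Fin m → ℝ be monotone (nondecreasing, i.e., the values are listed in sorted increasing order), and let F ⊆ Fin m be a set of 'faulty' indices with |F| ≤ b. Then for every index k with b ≤ k ≤ m − 1 − b, there exist indices i, j ∉ F such that v(i) ≤ v(k) ≤ v(j). Equivalently, every value that survives trimming away the b smallest and b largest values lies between the minimum and maximum of the values at non-faulty indices. -/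
/-- If `v : Fin m → ℝ` lists `m ≥ 2b+1` values in nondecreasing order and
`F` is a set of at most `b` faulty indices, then every value surviving the trimming of the
`b` smallest and `b` largest values lies between two values at non-faulty indices. -/
theorem trimmed_value_between_honest
    (m b : ℕ) (hm : 2 * b + 1 ≤ m) (v : Fin m → ℝ) (hv : Monotone v)
    (F : Finset (Fin m)) (hF : F.card ≤ b) :
    ∀ k : Fin m, b ≤ (k : ℕ) → (k : ℕ) ≤ m - 1 - b →
      ∃ i j : Fin m, i ∉ F ∧ j ∉ F ∧ v i ≤ v k ∧ v k ≤ v j := by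
  intro k hk1 hk2
  have hlo : F.card < (Finset.Iic k).card := by
    rw [Fin.card_Iic]; omega
  have hhi : F.card < (Finset.Ici k).card := by
    rw [Fin.card_Ici]; omega
  obtain ⟨i, hi⟩ := (Finset.sdiff_nonempty (s := Finset.Iic k) (t := F)).mpr
    (fun h => absurd (Finset.card_le_card h) (by omega))
  obtain ⟨j, hj⟩ := (Finset.sdiff_nonempty (s := Finset.Ici k) (t := F)).mpr
    (fun h => absurd (Finset.card_le_card h) (by omega))
  rw [Finset.mem_sdiff] at hi hj
  obtain ⟨hi, hiF⟩ := hi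
  obtain ⟨hj, hjF⟩ := hj
  exact ⟨i, j, hiF, hjF, hv (Finset.mem_Iic.mp hi), hv (Finset.mem_Ici.mp hj)⟩
end

section
/- Let m and b be natural numbers with m ≥ 2b + 1, let v : Fin m → ℝ be monotone (nondecreasing, i.e., the values are listed in sorted increasing order), and let F ⊆ Fin m be a set of 'faulty' indices with |F| ≤ b. Then the trimmed mean (1/(m − 2b)) · Σ_{k=b}^{m−b−1} v(k) lies between the minimum and maximum of the values at non-faulty indices: there exist indices i, j ∉ F with v(i) ≤ (1/(m − 2b)) · Σ_{k=b}^{m−b−1} v(k) ≤ v(j). -/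
/-- If `v : Fin m → ℝ` lists `m ≥ 2b+1` values in nondecreasing order and
`F` is a set of at most `b` faulty indices, then the trimmed mean
`(1/(m-2b)) ∑_{k=b}^{m-b-1} v k` lies between two values at non-faulty indices. -/
theorem trimmed_mean_between_honest
    (m b : ℕ) (hm : 2 * b + 1 ≤ m) (v : Fin m → ℝ) (hv : Monotone v)
    (F : Finset (Fin m)) (hF : F.card ≤ b) :
    ∃ i j : Fin m, i ∉ F ∧ j ∉ F ∧
      v i ≤ (1 / ((m : ℝ) - 2 * b)) *
          ∑ k ∈ Finset.univ.filter (fun k : Fin m => b ≤ (k : ℕ) ∧ (k : ℕ) < m - b), v k ∧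
      (1 / ((m : ℝ) - 2 * b)) *
          ∑ k ∈ Finset.univ.filter (fun k : Fin m => b ≤ (k : ℕ) ∧ (k : ℕ) < m - b), v k
        ≤ v j := by
  have hbm : b < m := by omega
  have hmb : m - b - 1 < m := by omega
  set a : Fin m := ⟨b, hbm⟩
  set c : Fin m := ⟨m - b - 1, hmb⟩
  -- the trimmed index set is Icc a c
  have hset : Finset.univ.filter (fun k : Fin m => b ≤ (k : ℕ) ∧ (k : ℕ) < m - b)
      = Finset.Icc a c := by
    ext k
    simp only [Finset.mem_filter, Finset.mem_univ, true_and, Finset.mem_Icc]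
    constructor
    · rintro ⟨h1, h2⟩
      exact ⟨by simpa [a, Fin.le_def] using h1, by simp [c, Fin.le_def]; omega⟩
    · rintro ⟨h1, h2⟩
      have h1' : b ≤ (k : ℕ) := by simpa [a, Fin.le_def] using h1
      have h2' : (k : ℕ) ≤ m - b - 1 := by simpa [c, Fin.le_def] using h2
      exact ⟨h1', by omega⟩
  have hcard : (Finset.Icc a c).card = m - 2 * b := by
    rw [Fin.card_Icc]; simp [a, c]; omega
  have hcardR : ((m : ℝ) - 2 * b) = ((m - 2 * b : ℕ) : ℝ) := by
    push_cast [Nat.cast_sub (by omega : 2 * b ≤ m)]; ring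
  have hpos : (0 : ℝ) < (m : ℝ) - 2 * b := by
    rw [hcardR]; exact_mod_cast (by omega : 0 < m - 2 * b)
  -- find honest i with i ≤ a
  obtain ⟨i, hiF, hia⟩ : ∃ i : Fin m, i ∉ F ∧ i ≤ a := by
    have h1 : F.card < (Finset.Iic a).card := by
      rw [Fin.card_Iic]; simp [a]; omega
    have h2 : 0 < ((Finset.Iic a) \ F).card :=
      lt_of_lt_of_le (by omega : 0 < (Finset.Iic a).card - F.card) (Finset.le_card_sdiff _ _)
    obtain ⟨i, hi⟩ := Finset.card_pos.mp h2
    rw [Finset.mem_sdiff] at hi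
    exact ⟨i, hi.2, Finset.mem_Iic.mp hi.1⟩
  obtain ⟨j, hjF, hcj⟩ : ∃ j : Fin m, j ∉ F ∧ c ≤ j := by
    have h1 : F.card < (Finset.Ici c).card := by
      rw [Fin.card_Ici]; simp [c]; omega
    have h2 : 0 < ((Finset.Ici c) \ F).card :=
      lt_of_lt_of_le (by omega : 0 < (Finset.Ici c).card - F.card) (Finset.le_card_sdiff _ _)
    obtain ⟨j, hj⟩ := Finset.card_pos.mp h2
    rw [Finset.mem_sdiff] at hj
    exact ⟨j, hj.2, Finset.mem_Ici.mp hj.1⟩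
  refine ⟨i, j, hiF, hjF, ?_, ?_⟩
  · rw [hset, div_mul_eq_mul_div, one_mul, le_div_iff₀ hpos]
    calc v i * ((m : ℝ) - 2 * b) = ∑ _k ∈ Finset.Icc a c, v i := by
          rw [Finset.sum_const, hcard, hcardR]; ring
      _ ≤ ∑ k ∈ Finset.Icc a c, v k := by
          apply Finset.sum_le_sum
          intro k hk
          exact hv (le_trans hia (Finset.mem_Icc.mp hk).1)
  · rw [hset, div_mul_eq_mul_div, one_mul, div_le_iff₀ hpos]
    calc ∑ k ∈ Finset.Icc a c, v k ≤ ∑ _k ∈ Finset.Icc a c, v j := by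
          apply Finset.sum_le_sum
          intro k hk
          exact hv (le_trans (Finset.mem_Icc.mp hk).2 hcj)
      _ = v j * ((m : ℝ) - 2 * b) := by
          rw [Finset.sum_const, hcard, hcardR]; ring
end

section
/- Let n be a positive integer, let Q be an n × n row-stochastic real matrix, and suppose there exist a column index j₀ and a real β with 0 < β ≤ 1 such that Q(i, j₀) ≥ β for every row i. Then for every vector v : Fin n → ℝ, the oscillation contracts by a factor (1 − β): max_i (Q·v)(i) − min_i (Q·v)(i) ≤ (1 − β) · (max_j v(j) − min_j v(j)). -/
/-- A row-stochastic matrix with a column bounded below by `β` (a scrambling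
matrix) contracts the oscillation of any vector by the factor `1 - β`. -/
theorem scrambling_contracts_oscillation
    (n : ℕ) (hn : 0 < n)
    (Q : Matrix (Fin n) (Fin n) ℝ)
    (hnonneg : ∀ i j, 0 ≤ Q i j)
    (hrow : ∀ i, ∑ j, Q i j = 1)
    (j₀ : Fin n) (β : ℝ) (hβ : 0 < β) (hβ1 : β ≤ 1)
    (hcol : ∀ i, β ≤ Q i j₀)
    (v : Fin n → ℝ) :
    Finset.univ.sup' (Finset.univ_nonempty_iff.mpr ⟨⟨0, hn⟩⟩) (Q.mulVec v) -
        Finset.univ.inf' (Finset.univ_nonempty_iff.mpr ⟨⟨0, hn⟩⟩) (Q.mulVec v)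
      ≤ (1 - β) *
        (Finset.univ.sup' (Finset.univ_nonempty_iff.mpr ⟨⟨0, hn⟩⟩) v -
          Finset.univ.inf' (Finset.univ_nonempty_iff.mpr ⟨⟨0, hn⟩⟩) v) := by
  have hne : (Finset.univ : Finset (Fin n)).Nonempty := Finset.univ_nonempty_iff.mpr ⟨⟨0, hn⟩⟩
  set M := Finset.univ.sup' hne v with hM
  set m := Finset.univ.inf' hne v with hm
  have hc : ∀ i j, 0 ≤ Q i j - (if j = j₀ then β else 0) := by
    intro i j
    by_cases h : j = j₀ <;> simp [h]
    · exact h ▸ hcol i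
    · exact hnonneg i j
  have hcsum : ∀ i, ∑ j, (Q i j - (if j = j₀ then β else 0)) = 1 - β := by
    intro i
    rw [Finset.sum_sub_distrib, hrow i]
    simp
  have hsplit : ∀ i, Q.mulVec v i
      = β * v j₀ + ∑ j, (Q i j - (if j = j₀ then β else 0)) * v j := by
    intro i
    simp only [Matrix.mulVec, dotProduct, sub_mul]
    rw [Finset.sum_sub_distrib]
    have : ∑ j, (if j = j₀ then β else 0) * v j = β * v j₀ := by
      simp [Finset.sum_ite_eq']
    rw [this]; ring
  have hub : ∀ i, Q.mulVec v i ≤ β * v j₀ + (1 - β) * M := by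
    intro i
    rw [hsplit i]
    have : ∑ j, (Q i j - (if j = j₀ then β else 0)) * v j
        ≤ ∑ j, (Q i j - (if j = j₀ then β else 0)) * M := by
      apply Finset.sum_le_sum
      intro j _
      exact mul_le_mul_of_nonneg_left (Finset.le_sup' v (Finset.mem_univ j)) (hc i j)
    have h2 : ∑ j, (Q i j - (if j = j₀ then β else 0)) * M = (1 - β) * M := by
      rw [← Finset.sum_mul, hcsum i]
    linarith
  have hlb : ∀ i, β * v j₀ + (1 - β) * m ≤ Q.mulVec v i := by
    intro i
    rw [hsplit i]
    have : ∑ j, (Q i j - (if j = j₀ then β else 0)) * m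
        ≤ ∑ j, (Q i j - (if j = j₀ then β else 0)) * v j := by
      apply Finset.sum_le_sum
      intro j _
      exact mul_le_mul_of_nonneg_left (Finset.inf'_le v (Finset.mem_univ j)) (hc i j)
    have h2 : ∑ j, (Q i j - (if j = j₀ then β else 0)) * m = (1 - β) * m := by
      rw [← Finset.sum_mul, hcsum i]
    linarith
  have hs : Finset.univ.sup' hne (Q.mulVec v) ≤ β * v j₀ + (1 - β) * M :=
    Finset.sup'_le _ _ fun i _ => hub i
  have hi : β * v j₀ + (1 - β) * m ≤ Finset.univ.inf' hne (Q.mulVec v) :=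
    Finset.le_inf' _ _ fun i _ => hlb i
  linarith
end

section
/- Let n be a positive integer, let 0 < β ≤ 1, and let (Q t) for t ∈ ℕ be a sequence of n × n row-stochastic real matrices such that for each t there exists a column index j_t with Q t (i, j_t) ≥ β for every row i. Then for every initial vector v : Fin n → ℝ there exists a real number c with min_j v(j) ≤ c ≤ max_j v(j) such that, for every index i, the i-th entry of (Q T · Q (T−1) ⋯ Q 1 · Q 0) · v converges to c as T → ∞. In particular, the difference between any two entries of the iterates tends to 0. -/
/-- The backward partial product `Q T * Q (T-1) * ⋯ * Q 1 * Q 0`. -/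
def backwardProd (n : ℕ) (Q : ℕ → Matrix (Fin n) (Fin n) ℝ) : ℕ → Matrix (Fin n) (Fin n) ℝ
  | 0 => Q 0
  | T + 1 => Q (T + 1) * backwardProd n Q T

private lemma weighted_le_sup {n : ℕ} (ne : (Finset.univ : Finset (Fin n)).Nonempty)
    (c f : Fin n → ℝ) (hc : ∀ j, 0 ≤ c j) :
    ∑ j, c j * f j ≤ (∑ j, c j) * Finset.univ.sup' ne f := by
  rw [Finset.sum_mul]
  exact Finset.sum_le_sum fun j _ =>
    mul_le_mul_of_nonneg_left (Finset.le_sup' f (Finset.mem_univ j)) (hc j)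

private lemma inf_le_weighted {n : ℕ} (ne : (Finset.univ : Finset (Fin n)).Nonempty)
    (c f : Fin n → ℝ) (hc : ∀ j, 0 ≤ c j) :
    (∑ j, c j) * Finset.univ.inf' ne f ≤ ∑ j, c j * f j := by
  rw [Finset.sum_mul]
  exact Finset.sum_le_sum fun j _ =>
    mul_le_mul_of_nonneg_left (Finset.inf'_le f (Finset.mem_univ j)) (hc j)

/-- Backward products of row-stochastic scrambling matrices (each having a
column bounded below by `β > 0`) drive every initial vector to consensus at a value `c`
lying in the convex hull of the initial entries. -/
theorem scrambling_products_reach_consensus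
    (n : ℕ) (hn : 0 < n) (β : ℝ) (hβ : 0 < β) (hβ1 : β ≤ 1)
    (Q : ℕ → Matrix (Fin n) (Fin n) ℝ)
    (hnonneg : ∀ t i j, 0 ≤ Q t i j)
    (hrow : ∀ t i, ∑ j, Q t i j = 1)
    (hscr : ∀ t : ℕ, ∃ j : Fin n, ∀ i : Fin n, β ≤ Q t i j)
    (v : Fin n → ℝ) :
    ∃ c : ℝ,
      Finset.univ.inf' (Finset.univ_nonempty_iff.mpr ⟨⟨0, hn⟩⟩) v ≤ c ∧
      c ≤ Finset.univ.sup' (Finset.univ_nonempty_iff.mpr ⟨⟨0, hn⟩⟩) v ∧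
      ∀ i : Fin n,
        Filter.Tendsto (fun T => (backwardProd n Q T).mulVec v i)
          Filter.atTop (nhds c) := by
  classical
  have ne : (Finset.univ : Finset (Fin n)).Nonempty :=
    Finset.univ_nonempty_iff.mpr ⟨⟨0, hn⟩⟩
  -- the iterates
  set u : ℕ → Fin n → ℝ := fun T => Nat.rec v (fun t w => (Q t).mulVec w) T with hu
  have huS : ∀ t, u (t + 1) = (Q t).mulVec (u t) := fun t => rfl
  have hu0 : u 0 = v := rfl
  have hstep : ∀ t i, u (t + 1) i = ∑ j, Q t i j * u t j := fun t i => rfl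
  have hw : ∀ T, (backwardProd n Q T).mulVec v = u (T + 1) := by
    intro T
    induction T with
    | zero => rfl
    | succ T ih =>
      show (Q (T + 1) * backwardProd n Q T).mulVec v = _
      rw [← Matrix.mulVec_mulVec, ih, huS]
  clear_value u
  set m : ℕ → ℝ := fun T => Finset.univ.inf' ne (u T) with hm
  set M : ℕ → ℝ := fun T => Finset.univ.sup' ne (u T) with hM
  have hmM : ∀ t, m t ≤ M t := fun t =>
    le_trans (Finset.inf'_le _ (Finset.mem_univ (⟨0, hn⟩ : Fin n)))
      (Finset.le_sup' _ (Finset.mem_univ (⟨0, hn⟩ : Fin n)))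
  -- one-step bounds
  have key : ∀ t, m t ≤ m (t + 1) ∧ M (t + 1) ≤ M t ∧
      M (t + 1) - m (t + 1) ≤ (1 - β) * (M t - m t) := by
    intro t
    obtain ⟨js, hjs⟩ := hscr t
    set f := u t with hf
    have hentry : ∀ i, u (t + 1) i = ∑ j, Q t i j * f j := fun i => hstep t i
    set c : Fin n → Fin n → ℝ := fun i j => Q t i j - if j = js then β else 0 with hc
    have hcnn : ∀ i j, 0 ≤ c i j := by
      intro i j
      by_cases h : j = js
      · subst h; have := hjs i
        simp only [hc, eq_self_iff_true, if_true]; linarith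
      · simp only [hc, if_neg h, sub_zero]; exact hnonneg t i j
    have hcsum : ∀ i, ∑ j, c i j = 1 - β := by
      intro i
      simp [hc, Finset.sum_sub_distrib, hrow t i]
    have hsplit : ∀ i, u (t + 1) i = (∑ j, c i j * f j) + β * f js := by
      intro i
      rw [hentry]
      have : ∀ j, c i j * f j = Q t i j * f j - (if j = js then β else 0) * f j := by
        intro j; simp only [hc]; ring
      simp only [this, Finset.sum_sub_distrib]
      have : ∑ j, (if j = js then β else 0) * f j = β * f js := by
        simp [ite_mul]
      rw [this]; ring
    have hup : ∀ i, u (t + 1) i ≤ β * f js + (1 - β) * M t := by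
      intro i
      rw [hsplit i]
      have := weighted_le_sup ne (c i) f (hcnn i)
      rw [hcsum i] at this
      linarith
    have hlo : ∀ i, β * f js + (1 - β) * m t ≤ u (t + 1) i := by
      intro i
      rw [hsplit i]
      have := inf_le_weighted ne (c i) f (hcnn i)
      rw [hcsum i] at this
      linarith
    have hMs : M (t + 1) ≤ β * f js + (1 - β) * M t :=
      Finset.sup'_le ne _ fun i _ => hup i
    have hms : β * f js + (1 - β) * m t ≤ m (t + 1) :=
      Finset.le_inf' ne _ fun i _ => hlo i
    have hfjs_le : f js ≤ M t := Finset.le_sup' f (Finset.mem_univ js)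
    have hfjs_ge : m t ≤ f js := Finset.inf'_le f (Finset.mem_univ js)
    refine ⟨?_, ?_, by linarith⟩
    · have := hlo (⟨0, hn⟩ : Fin n)
      calc m t = β * m t + (1 - β) * m t := by ring
        _ ≤ β * f js + (1 - β) * m t := by nlinarith
        _ ≤ m (t + 1) := hms
    · calc M (t + 1) ≤ β * f js + (1 - β) * M t := hMs
        _ ≤ β * M t + (1 - β) * M t := by nlinarith
        _ = M t := by ring
  have hmono : Monotone m := monotone_nat_of_le_succ fun t => (key t).1
  have hanti : Antitone M := antitone_nat_of_succ_le fun t => (key t).2.1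
  have hbdd : ∀ t, m t ≤ M 0 := fun t => le_trans (hmM t) (hanti (Nat.zero_le t))
  -- the limit
  set c : ℝ := ⨆ t, m t with hcdef
  have hbddab : BddAbove (Set.range m) := ⟨M 0, fun x ⟨t, ht⟩ => ht ▸ hbdd t⟩
  have hmc : Filter.Tendsto m Filter.atTop (nhds c) := tendsto_atTop_ciSup hmono hbddab
  have hmlec : ∀ t, m t ≤ c := fun t => le_ciSup hbddab t
  have hcle : c ≤ M 0 := ciSup_le hbdd
  -- contraction of the spread
  have hD : ∀ t, M t - m t ≤ (1 - β) ^ t * (M 0 - m 0) := by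
    intro t
    induction t with
    | zero => simp
    | succ t ih =>
      calc M (t + 1) - m (t + 1) ≤ (1 - β) * (M t - m t) := (key t).2.2
        _ ≤ (1 - β) * ((1 - β) ^ t * (M 0 - m 0)) := by
            apply mul_le_mul_of_nonneg_left ih (by linarith)
        _ = (1 - β) ^ (t + 1) * (M 0 - m 0) := by ring
  have hgeo : Filter.Tendsto (fun t => (1 - β) ^ t * (M 0 - m 0)) Filter.atTop (nhds 0) := by
    rw [show (0 : ℝ) = 0 * (M 0 - m 0) by ring]
    exact (tendsto_pow_atTop_nhds_zero_of_lt_one (by linarith) (by linarith)).mul_const _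
  have hDz : Filter.Tendsto (fun t => M t - m t) Filter.atTop (nhds 0) := by
    apply tendsto_of_tendsto_of_tendsto_of_le_of_le tendsto_const_nhds hgeo
    · intro t; simp; linarith [hmM t]
    · exact hD
  have hMc : Filter.Tendsto M Filter.atTop (nhds c) := by
    have : Filter.Tendsto (fun t => m t + (M t - m t)) Filter.atTop (nhds (c + 0)) :=
      hmc.add hDz
    simpa using this
  refine ⟨c, ?_, ?_, ?_⟩
  · simpa [hm, hu0] using hmlec 0
  · simpa [hM, hu0] using hcle
  · intro i
    have hle1 : ∀ T, m (T + 1) ≤ (backwardProd n Q T).mulVec v i := by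
      intro T; rw [hw T]; exact Finset.inf'_le _ (Finset.mem_univ i)
    have hle2 : ∀ T, (backwardProd n Q T).mulVec v i ≤ M (T + 1) := by
      intro T; rw [hw T]; exact Finset.le_sup' _ (Finset.mem_univ i)
    have h1 : Filter.Tendsto (fun T => m (T + 1)) Filter.atTop (nhds c) :=
      hmc.comp (Filter.tendsto_add_atTop_nat 1)
    have h2 : Filter.Tendsto (fun T => M (T + 1)) Filter.atTop (nhds c) :=
      hMc.comp (Filter.tendsto_add_atTop_nat 1)
    exact tendsto_of_tendsto_of_tendsto_of_le_of_le h1 h2 hle1 hle2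
end

section
/- Let n be a positive integer, let 0 < β ≤ 1, and let (Q t) for t ∈ ℕ be a sequence of n × n row-stochastic real matrices such that for each t there exists a column index j_t with Q t (i, j_t) ≥ β for every row i. Define the partial products P T = Q T · Q (T−1) ⋯ Q 1 · Q 0. Then P T converges entrywise as T → ∞ to an n × n row-stochastic matrix all of whose rows are identical. -/
/-- Key contraction step: multiplying by a scrambling row-stochastic matrix shrinks the
spread of any column to at most `(1-β)` times the old spread. -/
lemma scrambling_contraction {n : ℕ} [Nonempty (Fin n)] {β : ℝ}
    (A B : Matrix (Fin n) (Fin n) ℝ)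
    (hAnn : ∀ i k, 0 ≤ A i k) (hArow : ∀ i, ∑ k, A i k = 1)
    (jstar : Fin n) (hA : ∀ i, β ≤ A i jstar)
    (j : Fin n) (m M : ℝ) (hlb : ∀ k, m ≤ B k j) (hub : ∀ k, B k j ≤ M)
    (i i' : Fin n) :
    (A * B) i j - (A * B) i' j ≤ (1 - β) * (M - m) := by
  set r : Fin n → Fin n → ℝ := fun i k => A i k - β * (if k = jstar then 1 else 0) with hr
  have hrnn : ∀ i k, 0 ≤ r i k := by
    intro i k
    by_cases h : k = jstar <;> simp [hr, h]
    · subst h; linarith [hA i]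
    · exact hAnn i k
  have hrsum : ∀ i, ∑ k, r i k = 1 - β := by
    intro i
    simp [hr, Finset.sum_sub_distrib, hArow i, mul_ite]
  have hdecomp : ∀ i, (A * B) i j = β * B jstar j + ∑ k, r i k * B k j := by
    intro i
    rw [Matrix.mul_apply]
    have : ∑ k, A i k * B k j = ∑ k, (r i k * B k j + β * (if k = jstar then 1 else 0) * B k j) := by
      apply Finset.sum_congr rfl; intro k _
      by_cases h : k = jstar <;> simp [hr, h] <;> ring
    rw [this, Finset.sum_add_distrib]
    have : ∑ k, β * (if k = jstar then 1 else 0) * B k j = β * B jstar j := by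
      simp [mul_ite, ite_mul]
    rw [this]; ring
  have hup : ∑ k, r i k * B k j ≤ (1 - β) * M := by
    calc ∑ k, r i k * B k j ≤ ∑ k, r i k * M :=
          Finset.sum_le_sum fun k _ => mul_le_mul_of_nonneg_left (hub k) (hrnn i k)
      _ = (1 - β) * M := by rw [← Finset.sum_mul, hrsum]
  have hdn : (1 - β) * m ≤ ∑ k, r i' k * B k j := by
    calc (1 - β) * m = ∑ k, r i' k * m := by rw [← Finset.sum_mul, hrsum]
      _ ≤ ∑ k, r i' k * B k j :=
          Finset.sum_le_sum fun k _ => mul_le_mul_of_nonneg_left (hlb k) (hrnn i' k)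
  rw [hdecomp i, hdecomp i']
  have := sub_le_sub hup hdn
  linarith

/-- Backward products of row-stochastic scrambling matrices (each having a
column bounded below by `β > 0`) converge entrywise to a row-stochastic matrix all of whose
rows are identical. -/
theorem scrambling_products_converge_to_identical_rows
    (n : ℕ) (hn : 0 < n) (β : ℝ) (hβ : 0 < β) (hβ1 : β ≤ 1)
    (Q : ℕ → Matrix (Fin n) (Fin n) ℝ)
    (hnonneg : ∀ t i j, 0 ≤ Q t i j)
    (hrow : ∀ t i, ∑ j, Q t i j = 1)
    (hscr : ∀ t : ℕ, ∃ j : Fin n, ∀ i : Fin n, β ≤ Q t i j) :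
    ∃ L : Matrix (Fin n) (Fin n) ℝ,
      (∀ i j, 0 ≤ L i j) ∧
      (∀ i, ∑ j, L i j = 1) ∧
      (∀ i i' j, L i j = L i' j) ∧
      (∀ i j, Filter.Tendsto (fun T => backwardProd n Q T i j)
        Filter.atTop (nhds (L i j))) := by
  haveI : Nonempty (Fin n) := Fin.pos_iff_nonempty.mp hn
  set P := backwardProd n Q with hPdef
  have hPsucc : ∀ T, P (T + 1) = Q (T + 1) * P T := fun T => rfl
  have hPnn : ∀ T i j, 0 ≤ P T i j := by
    intro T
    induction T with
    | zero => exact hnonneg 0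
    | succ T ih =>
      intro i j
      rw [hPsucc, Matrix.mul_apply]
      exact Finset.sum_nonneg fun k _ => mul_nonneg (hnonneg _ _ _) (ih _ _)
  have hProw : ∀ T i, ∑ j, P T i j = 1 := by
    intro T
    induction T with
    | zero => exact hrow 0
    | succ T ih =>
      intro i
      rw [hPsucc]
      simp only [Matrix.mul_apply]
      rw [Finset.sum_comm]
      have : ∀ k ∈ Finset.univ, ∑ j, Q (T + 1) i k * P T k j = Q (T + 1) i k := by
        intro k _; rw [← Finset.mul_sum, ih k, mul_one]
      rw [Finset.sum_congr rfl this, hrow]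
  -- column-wise min and max
  set mmin : Fin n → ℕ → ℝ :=
    fun j T => Finset.univ.inf' Finset.univ_nonempty (fun i => P T i j) with hmmin
  set mmax : Fin n → ℕ → ℝ :=
    fun j T => Finset.univ.sup' Finset.univ_nonempty (fun i => P T i j) with hmmax
  have hle_min : ∀ j T i, mmin j T ≤ P T i j := fun j T i =>
    Finset.inf'_le (fun i => P T i j) (Finset.mem_univ i)
  have hle_max : ∀ j T i, P T i j ≤ mmax j T := fun j T i =>
    Finset.le_sup' (fun i => P T i j) (Finset.mem_univ i)
  have hmin_mono : ∀ j, Monotone (mmin j) := by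
    intro j
    apply monotone_nat_of_le_succ
    intro T
    apply Finset.le_inf'
    intro i _
    rw [hPsucc, Matrix.mul_apply]
    calc mmin j T = ∑ k, Q (T + 1) i k * mmin j T := by
          rw [← Finset.sum_mul, hrow, one_mul]
      _ ≤ ∑ k, Q (T + 1) i k * P T k j :=
          Finset.sum_le_sum fun k _ =>
            mul_le_mul_of_nonneg_left (hle_min j T k) (hnonneg _ _ _)
  have hmax_anti : ∀ j, Antitone (mmax j) := by
    intro j
    apply antitone_nat_of_succ_le
    intro T
    apply Finset.sup'_le
    intro i _
    rw [hPsucc, Matrix.mul_apply]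
    calc ∑ k, Q (T + 1) i k * P T k j ≤ ∑ k, Q (T + 1) i k * mmax j T :=
          Finset.sum_le_sum fun k _ =>
            mul_le_mul_of_nonneg_left (hle_max j T k) (hnonneg _ _ _)
      _ = mmax j T := by rw [← Finset.sum_mul, hrow, one_mul]
  have hdiam_nn : ∀ j T, 0 ≤ mmax j T - mmin j T := by
    intro j T
    have := (hle_min j T (Classical.arbitrary _)).trans (hle_max j T (Classical.arbitrary _))
    linarith
  have hcontr : ∀ j T, mmax j (T + 1) - mmin j (T + 1) ≤ (1 - β) * (mmax j T - mmin j T) := by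
    intro j T
    obtain ⟨i0, _, hi0⟩ := Finset.exists_mem_eq_sup' Finset.univ_nonempty (fun i => P (T + 1) i j)
    obtain ⟨i1, _, hi1⟩ := Finset.exists_mem_eq_inf' Finset.univ_nonempty (fun i => P (T + 1) i j)
    obtain ⟨jstar, hjstar⟩ := hscr (T + 1)
    have hkey := scrambling_contraction (Q (T + 1)) (P T) (hnonneg (T + 1)) (hrow (T + 1))
      jstar hjstar j (mmin j T) (mmax j T) (hle_min j T) (hle_max j T) i0 i1
    calc mmax j (T + 1) - mmin j (T + 1) = P (T + 1) i0 j - P (T + 1) i1 j := by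
          rw [hmmax, hmmin]; simp only []; rw [hi0, hi1]
      _ = (Q (T + 1) * P T) i0 j - (Q (T + 1) * P T) i1 j := by rw [hPsucc]
      _ ≤ (1 - β) * (mmax j T - mmin j T) := hkey
  have hgeo : ∀ j T, mmax j T - mmin j T ≤ (1 - β) ^ T * (mmax j 0 - mmin j 0) := by
    intro j T
    induction T with
    | zero => simp
    | succ T ih =>
      calc mmax j (T + 1) - mmin j (T + 1) ≤ (1 - β) * (mmax j T - mmin j T) := hcontr j T
        _ ≤ (1 - β) * ((1 - β) ^ T * (mmax j 0 - mmin j 0)) :=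
            mul_le_mul_of_nonneg_left ih (by linarith)
        _ = (1 - β) ^ (T + 1) * (mmax j 0 - mmin j 0) := by ring
  have hdiam_tendsto : ∀ j, Filter.Tendsto (fun T => mmax j T - mmin j T)
      Filter.atTop (nhds 0) := by
    intro j
    have hgeo0 : Filter.Tendsto (fun T : ℕ => (1 - β) ^ T * (mmax j 0 - mmin j 0))
        Filter.atTop (nhds 0) := by
      have := (tendsto_pow_atTop_nhds_zero_of_lt_one (by linarith : (0:ℝ) ≤ 1 - β)
        (by linarith : 1 - β < 1)).mul_const (mmax j 0 - mmin j 0)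
      simpa using this
    exact tendsto_of_tendsto_of_tendsto_of_le_of_le tendsto_const_nhds hgeo0
      (fun T => hdiam_nn j T) (fun T => hgeo j T)
  -- min is bounded above, hence converges
  have hbdd : ∀ j, BddAbove (Set.range (mmin j)) := by
    intro j
    refine ⟨mmax j 0, ?_⟩
    rintro x ⟨T, rfl⟩
    calc mmin j T ≤ mmax j T := by
          have := hdiam_nn j T; linarith
      _ ≤ mmax j 0 := hmax_anti j (Nat.zero_le T)
  set L : Matrix (Fin n) (Fin n) ℝ := fun _ j => ⨆ T, mmin j T with hL
  have hmin_tendsto : ∀ j, Filter.Tendsto (mmin j) Filter.atTop (nhds (⨆ T, mmin j T)) :=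
    fun j => tendsto_atTop_ciSup (hmin_mono j) (hbdd j)
  have hentry : ∀ i j, Filter.Tendsto (fun T => P T i j) Filter.atTop (nhds (L i j)) := by
    intro i j
    have hupper : Filter.Tendsto (fun T => mmin j T + (mmax j T - mmin j T))
        Filter.atTop (nhds ((⨆ T, mmin j T) + 0)) :=
      (hmin_tendsto j).add (hdiam_tendsto j)
    rw [add_zero] at hupper
    refine tendsto_of_tendsto_of_tendsto_of_le_of_le (hmin_tendsto j) hupper
      (fun T => hle_min j T i) (fun T => ?_)
    have := hle_max j T i
    linarith
  refine ⟨L, ?_, ?_, ?_, hentry⟩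
  · intro i j
    have h0 : 0 ≤ mmin j 0 := Finset.le_inf' _ _ fun k _ => hPnn 0 k j
    calc (0:ℝ) ≤ mmin j 0 := h0
      _ ≤ ⨆ T, mmin j T := le_ciSup (hbdd j) 0
  · intro i
    have hsum : Filter.Tendsto (fun T => ∑ j, P T i j) Filter.atTop (nhds (∑ j, L i j)) :=
      tendsto_finset_sum _ fun j _ => hentry i j
    have hone : Filter.Tendsto (fun T : ℕ => ∑ j, P T i j) Filter.atTop (nhds 1) := by
      simpa [hProw] using (tendsto_const_nhds : Filter.Tendsto (fun _ : ℕ => (1:ℝ)) _ _)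
    exact tendsto_nhds_unique hsum hone
  · intro i i' j; rfl
end

section
/- Let n and D be positive integers, let 0 < β, and let A be an n × n real matrix with nonnegative entries such that A(i, i) ≥ β for every i. Let E be a relation on Fin n (a directed graph) such that A(w, u) ≥ β whenever E u w (there is an edge u → w), and suppose there is a vertex v₀ such that every vertex i is reachable from v₀ by a directed path of length at most D (with v₀ reaching itself in 0 steps). Then every entry of column v₀ of the matrix power A^D satisfies (A^D)(i, v₀) ≥ β^D; in particular column v₀ of A^D is entirely positive. -/
lemma walk_pow_bound {n : ℕ} (β : ℝ) (hβ : 0 < β)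
    (A : Matrix (Fin n) (Fin n) ℝ)
    (hnonneg : ∀ i j, 0 ≤ A i j)
    (g : ℕ → Fin n)
    (hstep : ∀ k, β ≤ A (g (k + 1)) (g k)) :
    ∀ m, β ^ m ≤ (A ^ m) (g m) (g 0) := by
  intro m
  induction m with
  | zero => simp [Matrix.one_apply]
  | succ m ih =>
    have hpn : ∀ p : ℕ, ∀ a b, 0 ≤ (A ^ p) a b := by
      intro p
      induction p with
      | zero => intro a b; simp [Matrix.one_apply]; positivity
      | succ p ihp =>
        intro a b
        rw [pow_succ, Matrix.mul_apply]
        exact Finset.sum_nonneg fun k _ => mul_nonneg (ihp a k) (hnonneg k b)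
    have h1 : A (g (m+1)) (g m) * (A ^ m) (g m) (g 0) ≤ (A * A ^ m) (g (m+1)) (g 0) := by
      rw [Matrix.mul_apply]
      exact Finset.single_le_sum (f := fun k => A (g (m+1)) k * (A ^ m) k (g 0))
        (fun k _ => mul_nonneg (hnonneg _ _) (hpn m k _)) (Finset.mem_univ (g m))
    have h2 : (A : Matrix (Fin n) (Fin n) ℝ) ^ (m+1) = A * A ^ m := by
      rw [pow_succ, ← pow_mul_comm']
    rw [h2]
    calc β ^ (m+1) = β * β ^ m := by ring
    _ ≤ A (g (m+1)) (g m) * (A ^ m) (g m) (g 0) :=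
        mul_le_mul (hstep m) ih (by positivity) (le_trans hβ.le (hstep m))
    _ ≤ _ := h1

/-- If a nonnegative matrix `A` has diagonal entries at least `β`, dominates
`β` on every edge of a directed graph `E` (an edge `u → w` gives `β ≤ A w u`), and some vertex
`v₀` reaches every vertex within `D` steps, then every entry of column `v₀` of `A ^ D` is at
least `β ^ D`. -/
theorem power_positive_column_of_source
    (n D : ℕ) (hn : 0 < n) (hD : 0 < D) (β : ℝ) (hβ : 0 < β)
    (A : Matrix (Fin n) (Fin n) ℝ)
    (hnonneg : ∀ i j, 0 ≤ A i j)
    (hdiag : ∀ i, β ≤ A i i)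
    (E : Fin n → Fin n → Prop)
    (hedge : ∀ u w, E u w → β ≤ A w u)
    (v₀ : Fin n)
    (hreach : ∀ i : Fin n, ∃ d : ℕ, d ≤ D ∧ ∃ f : ℕ → Fin n,
      f 0 = v₀ ∧ f d = i ∧ ∀ k, k < d → E (f k) (f (k + 1))) :
    ∀ i : Fin n, β ^ D ≤ (A ^ D) i v₀ := by
  intro i
  obtain ⟨d, hdD, f, hf0, hfd, hf⟩ := hreach i
  set g : ℕ → Fin n := fun k => f (min k d) with hg
  have hstep : ∀ k, β ≤ A (g (k + 1)) (g k) := by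
    intro k
    by_cases hk : k < d
    · have : min (k+1) d = k+1 := by omega
      have h2 : min k d = k := by omega
      simp only [hg, this, h2]
      exact hedge _ _ (hf k hk)
    · have h1 : min (k+1) d = d := by omega
      have h2 : min k d = d := by omega
      simp only [hg, h1, h2]
      exact hdiag _
  have := walk_pow_bound β hβ A hnonneg g hstep D
  have hgD : g D = i := by simp [hg, Nat.min_eq_right hdD, hfd]
  have hg0 : g 0 = v₀ := by simp [hg, hf0]
  rwa [hgD, hg0] at this
end

section
/- Let n, N, D be positive integers with D ≤ N, let 0 < β, and let B₁, …, B_N be n × n real matrices with nonnegative entries such that B_k(i, i) ≥ β for every k and every i. Let E be a relation on Fin n (a directed graph) with a vertex v₀ from which every vertex is reachable by a directed path of length at most D, and suppose there is a set K ⊆ {1, …, N} with |K| ≥ D such that for every k ∈ K, B_k(w, u) ≥ β whenever E u w. Then every entry of column v₀ of the product B_N · B_{N−1} ⋯ B₁ satisfies (B_N ⋯ B₁)(i, v₀) ≥ β^N; in particular that column is entirely positive. -/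
/-- The descending product `B N * B (N-1) * ⋯ * B 2 * B 1`. -/
def descProd (n : ℕ) (B : ℕ → Matrix (Fin n) (Fin n) ℝ) (N : ℕ) :
    Matrix (Fin n) (Fin n) ℝ :=
  ((List.range N).map (fun k => B (N - k))).prod

lemma descProd_succ (n : ℕ) (B : ℕ → Matrix (Fin n) (Fin n) ℝ) (m : ℕ) :
    descProd n B (m + 1) = B (m + 1) * descProd n B m := by
  unfold descProd
  rw [List.range_succ_eq_map, List.map_cons, List.prod_cons, List.map_map]
  refine congrArg _ (congrArg _ (List.map_congr_left fun k _ => ?_))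
  simp [Function.comp, Nat.succ_sub_succ]

lemma descProd_nonneg (n : ℕ) (B : ℕ → Matrix (Fin n) (Fin n) ℝ)
    (hnonneg : ∀ k i j, 0 ≤ B k i j) :
    ∀ m i j, 0 ≤ descProd n B m i j := by
  intro m
  induction m with
  | zero =>
    intro i j
    simp only [descProd, List.range_zero, List.map_nil, List.prod_nil]
    by_cases h : i = j <;> simp [Matrix.one_apply, h]
  | succ m ih =>
    intro i j
    rw [descProd_succ, Matrix.mul_apply]
    exact Finset.sum_nonneg fun k _ => mul_nonneg (hnonneg _ _ _) (ih _ _)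

/-- Let `B 1, …, B N` be nonnegative matrices with diagonal entries at least
`β`, let `E` be a directed graph with a vertex `v₀` reaching every vertex within `D` steps,
and suppose at least `D` of the factors dominate `β` on every edge of `E`. Then every entry of
column `v₀` of `B N * ⋯ * B 1` is at least `β ^ N`. -/
theorem desc_prod_positive_column_of_source
    (n N D : ℕ) (hn : 0 < n) (hN : 0 < N) (hD : 0 < D) (hDN : D ≤ N)
    (β : ℝ) (hβ : 0 < β)
    (B : ℕ → Matrix (Fin n) (Fin n) ℝ)
    (hnonneg : ∀ k i j, 0 ≤ B k i j)
    (hdiag : ∀ k i, β ≤ B k i i)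
    (E : Fin n → Fin n → Prop)
    (v₀ : Fin n)
    (hreach : ∀ i : Fin n, ∃ d : ℕ, d ≤ D ∧ ∃ f : ℕ → Fin n,
      f 0 = v₀ ∧ f d = i ∧ ∀ k, k < d → E (f k) (f (k + 1)))
    (K : Finset ℕ) (hK : K ⊆ Finset.Icc 1 N) (hKcard : D ≤ K.card)
    (hedge : ∀ k ∈ K, ∀ u w, E u w → β ≤ B k w u) :
    ∀ i : Fin n, β ^ N ≤ descProd n B N i v₀ := by
  set c : ℕ → ℕ := fun m => (K ∩ Finset.Icc 1 m).card with hc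
  have key : ∀ m, ∀ i : Fin n, ∀ d : ℕ, d ≤ c m →
      (∃ f : ℕ → Fin n, f 0 = v₀ ∧ f d = i ∧ ∀ k, k < d → E (f k) (f (k + 1))) →
      β ^ m ≤ descProd n B m i v₀ := by
    intro m
    induction m with
    | zero =>
      intro i d hd hf
      have : c 0 = 0 := by simp [hc]
      have hd0 : d = 0 := Nat.le_antisymm (this ▸ hd) (Nat.zero_le d)
      obtain ⟨f, hf0, hfd, _⟩ := hf
      subst hd0
      have : i = v₀ := by rw [← hfd, hf0]
      subst this
      simp [descProd, Matrix.one_apply]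
    | succ m ih =>
      intro i d hd hf
      rw [descProd_succ, Matrix.mul_apply, pow_succ, mul_comm]
      have step : ∀ j : Fin n, β ≤ B (m + 1) i j → β ^ m ≤ descProd n B m j v₀ →
          β * β ^ m ≤ ∑ x, B (m + 1) i x * descProd n B m x v₀ := by
        intro j hBj hPj
        calc β * β ^ m ≤ B (m + 1) i j * descProd n B m j v₀ :=
              mul_le_mul hBj hPj (le_of_lt (pow_pos hβ m)) (hnonneg _ _ _)
          _ ≤ ∑ x, B (m + 1) i x * descProd n B m x v₀ :=
              Finset.single_le_sum (f := fun x => B (m + 1) i x * descProd n B m x v₀)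
                (fun x _ => mul_nonneg (hnonneg _ _ _) (descProd_nonneg n B hnonneg _ _ _))
                (Finset.mem_univ j)
      by_cases hdm : d ≤ c m
      · exact step i (hdiag _ _) (ih i d hdm hf)
      · push_neg at hdm
        have hsub : K ∩ Finset.Icc 1 (m + 1) ⊆ insert (m + 1) (K ∩ Finset.Icc 1 m) := by
          intro x hx
          rw [Finset.mem_inter, Finset.mem_Icc] at hx
          rcases Nat.lt_or_ge x (m + 1) with h | h
          · exact Finset.mem_insert_of_mem (Finset.mem_inter.mpr
              ⟨hx.1, Finset.mem_Icc.mpr ⟨hx.2.1, Nat.lt_succ_iff.mp h⟩⟩)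
          · have : x = m + 1 := le_antisymm hx.2.2 h
            subst this
            exact Finset.mem_insert_self _ _
        have hcle : c (m + 1) ≤ c m + 1 :=
          le_trans (Finset.card_le_card hsub) (Finset.card_insert_le _ _)
        have hdeq : d = c m + 1 := le_antisymm (le_trans hd hcle) hdm
        have hmem : m + 1 ∈ K := by
          by_contra hno
          have : K ∩ Finset.Icc 1 (m + 1) = K ∩ Finset.Icc 1 m := by
            apply Finset.Subset.antisymm
            · intro x hx
              have hx' := hsub hx
              rcases Finset.mem_insert.mp hx' with h | h
              · exact absurd ((Finset.mem_inter.mp hx).1) (h ▸ hno)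
              · exact h
            · exact Finset.inter_subset_inter_left (Finset.Icc_subset_Icc_right (Nat.le_succ m))
          have : c (m + 1) = c m := by simp [hc, this]
          omega
        obtain ⟨f, hf0, hfd, hfe⟩ := hf
        have hd1 : 1 ≤ d := by omega
        set j := f (d - 1) with hj
        have hedge' : E j i := by
          have := hfe (d - 1) (by omega)
          rwa [Nat.sub_add_cancel hd1, hfd] at this
        refine step j (hedge (m + 1) hmem j i hedge') (ih j (d - 1) (by omega) ?_)
        exact ⟨f, hf0, rfl, fun k hk => hfe k (by omega)⟩
  intro i
  obtain ⟨d, hdD, hf⟩ := hreach i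
  have hKN : K ∩ Finset.Icc 1 N = K := Finset.inter_eq_left.mpr hK
  exact key N i d (by rw [hc]; simp only [hKN]; omega) hf
end

section
/- Let n be a positive integer, let 0 < β ≤ 1, and let (Q t) for t ∈ ℕ be a sequence of n × n row-stochastic real matrices such that for each t there exists a column index j_t with Q t (i, j_t) ≥ β for every row i. Then for every vector v : Fin n → ℝ and every T, the oscillation of the iterate decays geometrically: max_i ((Q T ⋯ Q 0)·v)(i) − min_i ((Q T ⋯ Q 0)·v)(i) ≤ (1 − β)^{T+1} · (max_j v(j) − min_j v(j)). -/
lemma osc_contract (n : ℕ) (ne : (Finset.univ : Finset (Fin n)).Nonempty)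
    (β : ℝ) (A : Matrix (Fin n) (Fin n) ℝ)
    (hA : ∀ i j, 0 ≤ A i j) (hrow : ∀ i, ∑ j, A i j = 1)
    (j0 : Fin n) (hj : ∀ i, β ≤ A i j0) (v : Fin n → ℝ) :
    Finset.univ.sup' ne (A.mulVec v) - Finset.univ.inf' ne (A.mulVec v)
      ≤ (1 - β) * (Finset.univ.sup' ne v - Finset.univ.inf' ne v) := by
  obtain ⟨i, -, hi⟩ := Finset.exists_mem_eq_sup' ne (A.mulVec v)
  obtain ⟨k, -, hk⟩ := Finset.exists_mem_eq_inf' ne (A.mulVec v)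
  set M := Finset.univ.sup' ne v with hMdef
  set m := Finset.univ.inf' ne v with hmdef
  have hM : ∀ j, v j ≤ M := fun j => Finset.le_sup' v (Finset.mem_univ j)
  have hm : ∀ j, m ≤ v j := fun j => Finset.inf'_le v (Finset.mem_univ j)
  have hMm : 0 ≤ M - m := sub_nonneg.2 ((hm i).trans (hM i))
  have hmin : β ≤ ∑ j, min (A i j) (A k j) :=
    le_trans (le_min (hj i) (hj k))
      (Finset.single_le_sum (f := fun j => min (A i j) (A k j))
        (fun j _ => le_min (hA i j) (hA k j)) (Finset.mem_univ j0))
  rw [hi, hk]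
  have expand : A.mulVec v i - A.mulVec v k = ∑ j, (A i j - A k j) * (v j - m) := by
    have h1 : ∀ j, (A i j - A k j) * (v j - m)
        = (A i j * v j - A k j * v j) - (m * A i j - m * A k j) := fun j => by ring
    simp only [h1, Finset.sum_sub_distrib, ← Finset.mul_sum, hrow]
    simp [Matrix.mulVec, dotProduct]
  rw [expand]
  calc ∑ j, (A i j - A k j) * (v j - m)
      ≤ ∑ j, (A i j - min (A i j) (A k j)) * (M - m) := by
        refine Finset.sum_le_sum fun j _ => ?_
        rcases le_total (A k j) (A i j) with h | h
        · rw [min_eq_right h]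
          exact mul_le_mul_of_nonneg_left (sub_le_sub_right (hM j) m) (sub_nonneg.2 h)
        · rw [min_eq_left h]
          have : (A i j - A k j) * (v j - m) ≤ 0 :=
            mul_nonpos_of_nonpos_of_nonneg (sub_nonpos.2 h) (sub_nonneg.2 (hm j))
          simpa using this
    _ = (∑ j, (A i j - min (A i j) (A k j))) * (M - m) := (Finset.sum_mul _ _ _).symm
    _ ≤ (1 - β) * (M - m) := by
        refine mul_le_mul_of_nonneg_right ?_ hMm
        rw [Finset.sum_sub_distrib, hrow]
        linarith [hmin]

/-- Backward products of row-stochastic scrambling matrices (each having a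
column bounded below by `β > 0`) shrink the oscillation of any vector geometrically: after
`T + 1` factors the oscillation is at most `(1 - β)^(T+1)` times the initial oscillation. -/
theorem scrambling_products_oscillation_decay
    (n : ℕ) (hn : 0 < n) (β : ℝ) (hβ : 0 < β) (hβ1 : β ≤ 1)
    (Q : ℕ → Matrix (Fin n) (Fin n) ℝ)
    (hnonneg : ∀ t i j, 0 ≤ Q t i j)
    (hrow : ∀ t i, ∑ j, Q t i j = 1)
    (hscr : ∀ t : ℕ, ∃ j : Fin n, ∀ i : Fin n, β ≤ Q t i j)
    (v : Fin n → ℝ) :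
    ∀ T : ℕ,
      Finset.univ.sup' (Finset.univ_nonempty_iff.mpr ⟨⟨0, hn⟩⟩)
          ((backwardProd n Q T).mulVec v) -
        Finset.univ.inf' (Finset.univ_nonempty_iff.mpr ⟨⟨0, hn⟩⟩)
          ((backwardProd n Q T).mulVec v)
      ≤ (1 - β) ^ (T + 1) *
        (Finset.univ.sup' (Finset.univ_nonempty_iff.mpr ⟨⟨0, hn⟩⟩) v -
          Finset.univ.inf' (Finset.univ_nonempty_iff.mpr ⟨⟨0, hn⟩⟩) v) := by
  set ne : (Finset.univ : Finset (Fin n)).Nonempty := Finset.univ_nonempty_iff.mpr ⟨⟨0, hn⟩⟩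
  have hβ0 : 0 ≤ 1 - β := by linarith
  intro T
  induction T with
  | zero =>
      obtain ⟨j0, hj0⟩ := hscr 0
      simpa [backwardProd, pow_one] using
        osc_contract n ne β (Q 0) (hnonneg 0) (hrow 0) j0 hj0 v
  | succ T ih =>
      obtain ⟨j0, hj0⟩ := hscr (T + 1)
      have key := osc_contract n ne β (Q (T + 1)) (hnonneg (T + 1)) (hrow (T + 1)) j0 hj0
        ((backwardProd n Q T).mulVec v)
      have hmv : (backwardProd n Q (T + 1)).mulVec v
          = (Q (T + 1)).mulVec ((backwardProd n Q T).mulVec v) := by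
        rw [show backwardProd n Q (T + 1) = Q (T + 1) * backwardProd n Q T from rfl,
          Matrix.mulVec_mulVec]
      rw [hmv]
      calc _ ≤ (1 - β) * (Finset.univ.sup' ne ((backwardProd n Q T).mulVec v)
              - Finset.univ.inf' ne ((backwardProd n Q T).mulVec v)) := key
        _ ≤ (1 - β) * ((1 - β) ^ (T + 1) *
              (Finset.univ.sup' ne v - Finset.univ.inf' ne v)) :=
            mul_le_mul_of_nonneg_left ih hβ0
        _ = (1 - β) ^ (T + 1 + 1) * (Finset.univ.sup' ne v - Finset.univ.inf' ne v) := by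
            rw [pow_succ]; ring
end
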